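/- arXiv:2008.07036 — 2 statements merged into one kernel-verified Lean document; each statement's English description precedes it below -/
import Mathlib

section
/- Let 0 < η < 1/e. There exists a constant C > 0 such that for every real z with z ≠ 0, the series ∑_{k=1}^∞ |sin(k z)| / k² converges and ∑_{k=1}^∞ |sin(k z)| / k² ≤ C·|z|·κ̃₁(|z|). -/
/-!
Write `x = |z|`. Since `|sin t| ≤ min(|t|, 1)`, the `k`-th term is at most `min(x/k, 1/k²)`.
Splitting the series at `N ≈ 1/x` bounds the first `N` terms by `x·H_N ≤ x(1 + log(1/x))` and
the tail by `∑_{k>N} 1/k² ≤ 2/(N+1) ≤ 2x`; this gives `C·x·log(1/x)` for `x ≤ η`, where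
`log(1/x) > 1`. For `x > η` the whole series is at most `∑ 1/k² ≤ 2`, and `x·κ̃₁(x) ≥ η`.
-/

open Real

noncomputable def kappa1 (η x : ℝ) : ℝ :=
  if x ≤ η then Real.log (1 / x) else Real.log (1 / η) - 1 + η / x

open Finset

lemma summable_one_div_nat_add_one_sq : Summable (fun k : ℕ => 1 / ((k : ℝ) + 1) ^ 2) := by
  simpa using Real.summable_one_div_nat_add_rpow 1 2

lemma tsum_one_div_nat_add_one_sq_tail_le (N : ℕ) :
    ∑' k : ℕ, 1 / (((k + N : ℕ) : ℝ) + 1) ^ 2 ≤ 2 / ((N : ℝ) + 1) := by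
  refine Real.tsum_le_of_sum_range_le (fun k => by positivity) fun m => ?_
  calc ∑ k ∈ range m, 1 / (((k + N : ℕ) : ℝ) + 1) ^ 2
      = ∑ i ∈ Ioo N (m + N + 1), ((i : ℝ) ^ 2)⁻¹ := by
        have shift := sum_Ico_add' (fun i : ℕ => ((i : ℝ) ^ 2)⁻¹) 0 m (N + 1)
        rw [zero_add] at shift
        rw [range_eq_Ico, add_assoc, ← Ico_add_one_left_eq_Ioo, ← shift]
        push_cast
        simp only [one_div, add_assoc]
    _ ≤ 2 / ((N : ℝ) + 1) := sum_Ioo_inv_sq_le N _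

lemma abs_sin_mul_div_sq_le_one_div_sq (z : ℝ) (k : ℕ) :
    |sin ((k + 1 : ℝ) * z)| / ((k : ℝ) + 1) ^ 2 ≤ 1 / ((k : ℝ) + 1) ^ 2 := by
  gcongr
  exact abs_sin_le_one _

lemma abs_sin_mul_div_sq_le_abs_div (z : ℝ) (k : ℕ) :
    |sin ((k + 1 : ℝ) * z)| / ((k : ℝ) + 1) ^ 2 ≤ |z| / ((k : ℝ) + 1) := by
  have hk : (0 : ℝ) < k + 1 := by positivity
  calc |sin ((k + 1 : ℝ) * z)| / ((k : ℝ) + 1) ^ 2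
      ≤ |(k + 1 : ℝ) * z| / ((k : ℝ) + 1) ^ 2 :=
        div_le_div_of_nonneg_right abs_sin_le_abs (by positivity)
    _ = |z| / ((k : ℝ) + 1) := by rw [abs_mul, abs_of_pos hk]; field_simp

lemma summable_abs_sin_mul_div_sq (z : ℝ) :
    Summable (fun k : ℕ => |sin ((k + 1 : ℝ) * z)| / ((k : ℝ) + 1) ^ 2) :=
  summable_one_div_nat_add_one_sq.of_nonneg_of_le (fun _ => by positivity)
    (abs_sin_mul_div_sq_le_one_div_sq z)

lemma tsum_abs_sin_mul_div_sq_le (z : ℝ) (N : ℕ) :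
    ∑' k : ℕ, |sin ((k + 1 : ℝ) * z)| / ((k : ℝ) + 1) ^ 2 ≤
      |z| * harmonic N + 2 / ((N : ℝ) + 1) := by
  set f : ℕ → ℝ := fun k => |sin ((k + 1 : ℝ) * z)| / ((k : ℝ) + 1) ^ 2
  have hf := summable_abs_sin_mul_div_sq z
  have head : ∑ k ∈ range N, f k ≤ |z| * harmonic N :=
    calc ∑ k ∈ range N, f k ≤ ∑ k ∈ range N, |z| * ((k : ℝ) + 1)⁻¹ :=
          sum_le_sum fun k _ => (abs_sin_mul_div_sq_le_abs_div z k).trans_eq (div_eq_mul_inv _ _)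
      _ = |z| * harmonic N := by simp [harmonic, mul_sum]
  have tail : ∑' k : ℕ, f (k + N) ≤ 2 / ((N : ℝ) + 1) :=
    calc ∑' k : ℕ, f (k + N) ≤ ∑' k : ℕ, 1 / (((k + N : ℕ) : ℝ) + 1) ^ 2 :=
          ((summable_nat_add_iff N).2 hf).tsum_le_tsum
            (fun k => abs_sin_mul_div_sq_le_one_div_sq z (k + N))
            ((summable_nat_add_iff N).2 summable_one_div_nat_add_one_sq)
      _ ≤ 2 / ((N : ℝ) + 1) := tsum_one_div_nat_add_one_sq_tail_le N
  rw [← hf.sum_add_tsum_nat_add N]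
  exact add_le_add head tail

lemma tsum_abs_sin_mul_div_sq_le_two (z : ℝ) :
    ∑' k : ℕ, |sin ((k + 1 : ℝ) * z)| / ((k : ℝ) + 1) ^ 2 ≤ 2 := by
  simpa using tsum_abs_sin_mul_div_sq_le z 0

lemma tsum_abs_sin_mul_div_sq_le_of_abs_le_one {z : ℝ} (hz : z ≠ 0) (hz₁ : |z| ≤ 1) :
    ∑' k : ℕ, |sin ((k + 1 : ℝ) * z)| / ((k : ℝ) + 1) ^ 2 ≤ |z| * (3 + log (1 / |z|)) := by
  have hx : 0 < |z| := abs_pos.mpr hz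
  set N := ⌊1 / |z|⌋₊
  have hN : 1 ≤ N := Nat.le_floor (by rw [Nat.cast_one, le_div_iff₀ hx, one_mul]; exact hz₁)
  have hlog : log N ≤ log (1 / |z|) :=
    log_le_log (by exact_mod_cast hN) (Nat.floor_le (by positivity))
  have hrem : 2 / ((N : ℝ) + 1) ≤ 2 * |z| := by
    rw [div_le_iff₀ (by positivity)]
    have := Nat.lt_floor_add_one (1 / |z|)
    rw [div_lt_iff₀ hx] at this
    nlinarith
  calc _ ≤ |z| * harmonic N + 2 / ((N : ℝ) + 1) := tsum_abs_sin_mul_div_sq_le z N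
    _ ≤ |z| * (1 + log N) + 2 / ((N : ℝ) + 1) := by gcongr; exact harmonic_le_one_add_log N
    _ ≤ |z| * (1 + log (1 / |z|)) + 2 * |z| := by gcongr
    _ = |z| * (3 + log (1 / |z|)) := by ring

lemma one_lt_log_one_div_of_lt_inv_exp {η : ℝ} (hη₀ : 0 < η) (hη₁ : η < 1 / exp 1) :
    1 < log (1 / η) := by
  rwa [lt_log_iff_exp_lt (by positivity), lt_one_div (exp_pos 1) hη₀]

lemma le_mul_kappa1_of_lt {η x : ℝ} (hη₀ : 0 < η) (hη : 1 ≤ log (1 / η)) (hx : η < x) :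
    η ≤ x * kappa1 η x := by
  rw [kappa1, if_neg hx.not_ge, mul_add, mul_div_cancel₀ η (hη₀.trans hx).ne']
  nlinarith

/-- For `0 < η < 1/e` there is `C > 0` such that for every `z ≠ 0`, the series
`∑_{k≥1} |sin(kz)|/k²` converges and is bounded by `C·|z|·κ̃₁(|z|)`. -/
theorem sum_abs_sin_div_sq_le (η : ℝ) (hη₀ : 0 < η) (hη₁ : η < 1 / Real.exp 1) :
    ∃ C : ℝ, 0 < C ∧ ∀ z : ℝ, z ≠ 0 →
      Summable (fun k : ℕ => |Real.sin ((k + 1 : ℝ) * z)| / ((k : ℝ) + 1) ^ 2) ∧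
      (∑' k : ℕ, |Real.sin ((k + 1 : ℝ) * z)| / ((k : ℝ) + 1) ^ 2) ≤
        C * |z| * kappa1 η |z| := by
  have hlogη := one_lt_log_one_div_of_lt_inv_exp hη₀ hη₁
  refine ⟨4 + 2 / η, by positivity, fun z hz => ⟨summable_abs_sin_mul_div_sq z, ?_⟩⟩
  have hx : 0 < |z| := abs_pos.mpr hz
  rcases le_or_gt |z| η with hsmall | hlarge
  · have hlog : 1 < log (1 / |z|) :=
      hlogη.trans_le (log_le_log (by positivity) (one_div_le_one_div_of_le hx hsmall))
    have hz₁ : |z| ≤ 1 :=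
      hsmall.trans (hη₁.le.trans ((div_le_one (exp_pos 1)).2 (one_le_exp zero_le_one)))
    rw [kappa1, if_pos hsmall]
    calc _ ≤ |z| * (3 + log (1 / |z|)) := tsum_abs_sin_mul_div_sq_le_of_abs_le_one hz hz₁
      _ ≤ (4 + 2 / η) * |z| * log (1 / |z|) := by
        have : 0 < 2 / η := by positivity
        nlinarith [mul_pos hx this]
  · calc _ ≤ 2 := tsum_abs_sin_mul_div_sq_le_two z
      _ ≤ (4 + 2 / η) * η := by rw [add_mul, div_mul_cancel₀ _ hη₀.ne']; linarith
      _ ≤ (4 + 2 / η) * (|z| * kappa1 η |z|) := by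
        gcongr; exact le_mul_kappa1_of_lt hη₀ hlogη.le hlarge
      _ = _ := (mul_assoc _ _ _).symm
end

section
/- Let 0 < η < 1/e. There exists a constant C > 0 such that for all real x, y with x ≠ y, the series ∑_{k=1}^∞ (sin(k x) − sin(k y)) / k² converges absolutely and | ∑_{k=1}^∞ (sin(k x) − sin(k y)) / k² | ≤ C·|x − y|·κ̃₁(|x − y|). -/
/-!
Since `|sin (n x) - sin (n y)| ≤ min 2 (n d)` with `d = |x - y|`, the series is dominated by
`∑ min 2 (n d) / n²`. For `d ≤ η` split it at `N = ⌈1/d⌉`: the head is at most `d · H_N`, about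
`d log (1/d)`, and the tail at most `2/N ≤ 2d`, which `log (1/d) ≥ 1` absorbs. For `d > η` the
whole sum is at most `2 ζ(2) ≤ 4`, while `d κ̃₁(d) ≥ η`.
-/

open Real

open Finset

lemma hasSum_one_div_add_one_sq : HasSum (fun k : ℕ => 1 / ((k : ℝ) + 1) ^ 2) (π ^ 2 / 6) := by
  simpa using (hasSum_nat_add_iff' 1).mpr hasSum_zeta_two

lemma summable_one_div_add_one_sq : Summable fun k : ℕ => 1 / ((k : ℝ) + 1) ^ 2 :=
  hasSum_one_div_add_one_sq.summable

lemma tsum_one_div_add_one_sq_le_two : ∑' k : ℕ, 1 / ((k : ℝ) + 1) ^ 2 ≤ 2 := by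
  rw [hasSum_one_div_add_one_sq.tsum_eq]
  nlinarith [pi_lt_d2, pi_pos]

lemma tsum_one_div_nat_add_add_one_sq_le {N : ℕ} (hN : N ≠ 0) :
    ∑' k : ℕ, 1 / (((k + N : ℕ) : ℝ) + 1) ^ 2 ≤ 1 / (N : ℝ) := by
  refine tsum_le_of_sum_range_le (fun k => by positivity) fun m => ?_
  have hreindex : ∑ k ∈ range m, 1 / (((k + N : ℕ) : ℝ) + 1) ^ 2 =
      ∑ i ∈ Ioc N (m + N), ((i : ℝ) ^ 2)⁻¹ := by
    rw [range_eq_Ico, ← Ico_add_one_add_one_eq_Ioc, ← zero_add (N + 1), add_assoc m,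
      ← sum_Ico_add']
    refine sum_congr rfl fun k _ => ?_
    push_cast; ring
  rw [hreindex, one_div]
  exact (sum_Ioc_inv_sq_le_sub hN (by omega)).trans (sub_le_self _ (by positivity))

noncomputable def sinDiffMajorant (d : ℝ) (k : ℕ) : ℝ := min 2 ((k + 1) * d) / ((k : ℝ) + 1) ^ 2

lemma abs_sin_sub_sin_div_sq_le_sinDiffMajorant (x y : ℝ) (k : ℕ) :
    |sin ((k + 1 : ℝ) * x) - sin ((k + 1 : ℝ) * y)| / ((k : ℝ) + 1) ^ 2 ≤
      sinDiffMajorant |x - y| k := by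
  refine div_le_div_of_nonneg_right (le_min ?_ ?_) (by positivity)
  · have hx := abs_sin_le_one ((k + 1 : ℝ) * x)
    have hy := abs_sin_le_one ((k + 1 : ℝ) * y)
    exact (abs_sub _ _).trans (by linarith)
  · calc |sin ((k + 1 : ℝ) * x) - sin ((k + 1 : ℝ) * y)|
        ≤ |(k + 1 : ℝ) * x - (k + 1) * y| := abs_sin_sub_sin_le _ _
      _ = (k + 1) * |x - y| := by rw [← mul_sub, abs_mul, abs_of_pos (by positivity)]

section sinDiffMajorant

variable {d : ℝ}

lemma sinDiffMajorant_nonneg (hd : 0 ≤ d) (k : ℕ) : 0 ≤ sinDiffMajorant d k := by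
  unfold sinDiffMajorant; positivity

lemma sinDiffMajorant_le_two_div (k : ℕ) :
    sinDiffMajorant d k ≤ 2 * (1 / ((k : ℝ) + 1) ^ 2) := by
  rw [mul_one_div]
  exact div_le_div_of_nonneg_right (min_le_left _ _) (by positivity)

lemma sinDiffMajorant_le_mul_inv (k : ℕ) : sinDiffMajorant d k ≤ d * ((k : ℝ) + 1)⁻¹ := by
  calc sinDiffMajorant d k ≤ (k + 1) * d / ((k : ℝ) + 1) ^ 2 :=
        div_le_div_of_nonneg_right (min_le_right _ _) (by positivity)
    _ = d * ((k : ℝ) + 1)⁻¹ := by field_simp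

lemma summable_sinDiffMajorant (hd : 0 ≤ d) : Summable (sinDiffMajorant d) :=
  (summable_one_div_add_one_sq.mul_left 2).of_nonneg_of_le (sinDiffMajorant_nonneg hd)
    sinDiffMajorant_le_two_div

lemma tsum_sinDiffMajorant_le_four (hd : 0 ≤ d) : ∑' k, sinDiffMajorant d k ≤ 4 := by
  calc ∑' k, sinDiffMajorant d k ≤ ∑' k : ℕ, 2 * (1 / ((k : ℝ) + 1) ^ 2) :=
        (summable_sinDiffMajorant hd).tsum_le_tsum sinDiffMajorant_le_two_div
          (summable_one_div_add_one_sq.mul_left 2)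
    _ ≤ 4 := by rw [tsum_mul_left]; linarith [tsum_one_div_add_one_sq_le_two]

lemma sum_range_sinDiffMajorant_le (hd : 0 ≤ d) (N : ℕ) :
    ∑ k ∈ range N, sinDiffMajorant d k ≤ d * (1 + log N) := by
  calc ∑ k ∈ range N, sinDiffMajorant d k ≤ ∑ k ∈ range N, d * ((k : ℝ) + 1)⁻¹ :=
        sum_le_sum fun k _ => sinDiffMajorant_le_mul_inv k
    _ = d * harmonic N := by rw [← mul_sum]; push_cast [harmonic]; rfl
    _ ≤ d * (1 + log N) := mul_le_mul_of_nonneg_left (harmonic_le_one_add_log N) hd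

lemma tsum_sinDiffMajorant_nat_add_le (hd : 0 ≤ d) {N : ℕ} (hN : N ≠ 0) :
    ∑' k, sinDiffMajorant d (k + N) ≤ 2 / N := by
  have hsummable := (summable_nat_add_iff N).mpr summable_one_div_add_one_sq
  calc ∑' k, sinDiffMajorant d (k + N) ≤ ∑' k : ℕ, 2 * (1 / (((k + N : ℕ) : ℝ) + 1) ^ 2) :=
        ((summable_nat_add_iff N).mpr (summable_sinDiffMajorant hd)).tsum_le_tsum
          (fun k => sinDiffMajorant_le_two_div (k + N)) (hsummable.mul_left 2)
    _ ≤ 2 / N := by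
        rw [tsum_mul_left, ← mul_one_div]
        exact mul_le_mul_of_nonneg_left (tsum_one_div_nat_add_add_one_sq_le hN) zero_le_two

lemma tsum_sinDiffMajorant_le_of_le_one (hd : 0 < d) (hd₁ : d ≤ 1) :
    ∑' k, sinDiffMajorant d k ≤ d * (4 + log (1 / d)) := by
  -- `N` is where the two branches of the `min` cross
  set N := ⌈1 / d⌉₊
  have hN : N ≠ 0 := (Nat.ceil_pos.mpr (by positivity)).ne'
  have hN_ge : 1 / d ≤ N := Nat.le_ceil _
  have hN_le : (N : ℝ) ≤ 2 / d := by
    have := Nat.ceil_lt_add_one (one_div_pos.mpr hd).le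
    have : 1 ≤ 1 / d := by rwa [le_div_iff₀ hd, one_mul]
    linarith [show 2 / d = 1 / d + 1 / d by ring]
  have hlogN : log N ≤ 1 + log (1 / d) := by
    calc log N ≤ log (2 * (1 / d)) := log_le_log (by positivity) (by rwa [mul_one_div])
      _ = log 2 + log (1 / d) := log_mul two_ne_zero (by positivity)
      _ ≤ 1 + log (1 / d) := by linarith [log_two_lt_d9]
  have htail : 2 / (N : ℝ) ≤ 2 * d := by
    rw [div_le_iff₀ (by positivity)]
    nlinarith [(div_le_iff₀ hd).mp hN_ge]
  rw [← (summable_sinDiffMajorant hd.le).sum_add_tsum_nat_add N]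
  calc ∑ k ∈ range N, sinDiffMajorant d k + ∑' k, sinDiffMajorant d (k + N)
      ≤ d * (1 + log N) + 2 / N :=
        add_le_add (sum_range_sinDiffMajorant_le hd.le N) (tsum_sinDiffMajorant_nat_add_le hd.le hN)
    _ ≤ d * (1 + (1 + log (1 / d))) + 2 * d := by gcongr
    _ = d * (4 + log (1 / d)) := by ring

end sinDiffMajorant

lemma one_le_log_one_div {t : ℝ} (ht₀ : 0 < t) (ht₁ : t < 1 / exp 1) : 1 ≤ log (1 / t) := by
  have := log_lt_log ht₀ ht₁
  rw [one_div, log_inv, log_exp] at this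
  rw [one_div, log_inv]
  linarith

lemma le_mul_kappa1_of_lt_s4 {η d : ℝ} (hη₀ : 0 < η) (hη₁ : η < 1 / exp 1) (hd : η < d) :
    η ≤ d * kappa1 η d := by
  rw [kappa1, if_neg hd.not_ge, mul_add, mul_div_cancel₀ η (hη₀.trans hd).ne']
  nlinarith [one_le_log_one_div hη₀ hη₁]

lemma tsum_sinDiffMajorant_le_mul_kappa1 {η d : ℝ} (hη₀ : 0 < η) (hη₁ : η < 1 / exp 1)
    (hd : 0 < d) : ∑' k, sinDiffMajorant d k ≤ (5 + 4 / η) * d * kappa1 η d := by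
  rcases le_or_gt d η with hdη | hηd
  · have hL := one_le_log_one_div hd (hdη.trans_lt hη₁)
    have hd₁ : d ≤ 1 := (hdη.trans hη₁.le).trans <| by
      rw [one_div]; exact inv_le_one_of_one_le₀ (one_le_exp zero_le_one)
    rw [kappa1, if_pos hdη]
    calc ∑' k, sinDiffMajorant d k ≤ d * (4 + log (1 / d)) :=
          tsum_sinDiffMajorant_le_of_le_one hd hd₁
      _ ≤ 5 * d * log (1 / d) := by nlinarith
      _ ≤ (5 + 4 / η) * d * log (1 / d) := by gcongr; exact le_add_of_nonneg_right (by positivity)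
  · have hκ := le_mul_kappa1_of_lt_s4 hη₀ hη₁ hηd
    calc ∑' k, sinDiffMajorant d k ≤ 4 := tsum_sinDiffMajorant_le_four hd.le
      _ = 4 / η * η := by field_simp
      _ ≤ 4 / η * (d * kappa1 η d) := by gcongr
      _ ≤ (5 + 4 / η) * d * kappa1 η d := by nlinarith

/-- Non-Lipschitz modulus-of-continuity estimate for `f(t,x) = λ(t)·∑_{k≥1} sin(kx)/k²`:
for `0 < η < 1/e` there is `C > 0` such that for all `x ≠ y`, the series
`∑_{k≥1} (sin(kx) − sin(ky))/k²` converges absolutely and its sum is bounded in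
absolute value by `C·|x−y|·κ̃₁(|x−y|)`. -/
theorem sum_sin_diff_div_sq_le (η : ℝ) (hη₀ : 0 < η) (hη₁ : η < 1 / Real.exp 1) :
    ∃ C : ℝ, 0 < C ∧ ∀ x y : ℝ, x ≠ y →
      Summable (fun k : ℕ =>
        |Real.sin ((k + 1 : ℝ) * x) - Real.sin ((k + 1 : ℝ) * y)| / ((k : ℝ) + 1) ^ 2) ∧
      |∑' k : ℕ, (Real.sin ((k + 1 : ℝ) * x) - Real.sin ((k + 1 : ℝ) * y)) / ((k : ℝ) + 1) ^ 2| ≤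
        C * |x - y| * kappa1 η |x - y| := by
  refine ⟨5 + 4 / η, by positivity, fun x y hxy => ?_⟩
  have hd : 0 < |x - y| := abs_pos.mpr (sub_ne_zero.mpr hxy)
  have hsummable := summable_sinDiffMajorant hd.le
  have hterm := abs_sin_sub_sin_div_sq_le_sinDiffMajorant x y
  refine ⟨hsummable.of_nonneg_of_le (fun k => by positivity) hterm, ?_⟩
  calc |∑' k : ℕ, (sin ((k + 1 : ℝ) * x) - sin ((k + 1 : ℝ) * y)) / ((k : ℝ) + 1) ^ 2|
      ≤ ∑' k, sinDiffMajorant |x - y| k := by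
        rw [← Real.norm_eq_abs]
        refine tsum_of_norm_bounded hsummable.hasSum fun k => ?_
        rw [Real.norm_eq_abs, abs_div, abs_sq]
        exact hterm k
    _ ≤ _ := tsum_sinDiffMajorant_le_mul_kappa1 hη₀ hη₁ hd
end
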